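/- Every connected component of the (undirected) 1-nearest-neighbor graph of a finite metric space with distinct pairwise distances contains exactly one pair of mutual nearest neighbors. -/

import Mathlib

/-!
The 1-NN graph is the functional graph of the fixed-point-free map `nn`. Two points joined
by a path in a functional graph have a common iterate; since the iterates of a mutual pair
stay in the pair, a component contains at most one mutual pair. Conversely, if `a` minimizes
`dist z (nn z)` over a component, then `dist (nn a) (nn (nn a)) ≤ dist (nn a) a` is also
minimal, so equality holds and distinct distances force `nn (nn a) = a`.
-/

open Finset

variable {X : Type*} [MetricSpace X] [Fintype X] [LinearOrder X]

/-- Tie-breaking key: `y` is compared to other points by distance to `x`,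
with ties broken by the fixed linear order on `X`. -/
noncomputable def nnKey (x y : X) : ℝ ×ₗ X := toLex (dist x y, y)

noncomputable instance nnKeyDec (x : X) :
    DecidableRel (fun y z : X => nnKey x y ≤ nnKey x z) :=
  fun _ _ => Classical.dec _

instance (x : X) : IsTrans X (fun y z => nnKey x y ≤ nnKey x z) :=
  ⟨fun _ _ _ h1 h2 => le_trans h1 h2⟩

instance (x : X) : IsAntisymm X (fun y z => nnKey x y ≤ nnKey x z) :=
  ⟨fun a b h1 h2 => by
    have h := le_antisymm h1 h2
    simpa [nnKey] using congrArg (fun p => (ofLex p).2) h⟩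

instance (x : X) : IsTotal X (fun y z => nnKey x y ≤ nnKey x z) :=
  ⟨fun _ _ => le_total _ _⟩

/-- The points of `X \ {x}` listed in order of increasing distance to `x`
(ties broken by the fixed linear order). -/
noncomputable def nnList (x : X) : List X :=
  (Finset.univ.erase x).sort (fun y z => nnKey x y ≤ nnKey x z)

/-- `nbhd k x` is the set `N_k(x)` of the `k` nearest neighbors of `x`. -/
noncomputable def nbhd (k : ℕ) (x : X) : Finset X :=
  ((nnList x).take k).toFinset

/-- The `k`-nearest-neighbor graph: `x — y` iff `y ∈ N_k(x)` or `x ∈ N_k(y)`. -/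
noncomputable def nnGraph (k : ℕ) : SimpleGraph X where
  Adj x y := x ≠ y ∧ (y ∈ nbhd k x ∨ x ∈ nbhd k y)
  symm := by
    constructor
    intro x y h
    exact ⟨h.1.symm, h.2.symm⟩
  loopless := by constructor; intro x h; exact h.1 rfl

/-- The cluster (connected component of the `k`-NN graph) containing `x`. -/
noncomputable def nnCluster (k : ℕ) (x : X) : Finset X := by
  classical
  exact Finset.univ.filter (fun y => (nnGraph (X := X) k).Reachable x y)

/-- The partition of `X` into connected components of the `k`-NN graph:
the maximal `k`-NN clustering. -/
noncomputable def maxClusters (k : ℕ) : Finset (Finset X) :=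
  Finset.univ.image (nnCluster (X := X) k)

/-- A partition of `X` each of whose cells contains the `k` nearest
neighbors of all of its elements. -/
def IsKNNClustering (k : ℕ) (P : Finset (Finset X)) : Prop :=
  (∀ C ∈ P, C.Nonempty) ∧
  (∀ C ∈ P, ∀ D ∈ P, C ≠ D → Disjoint C D) ∧
  (P.sup id = Finset.univ) ∧
  (∀ C ∈ P, ∀ x ∈ C, nbhd k x ⊆ C)

/-- All pairwise distances are distinct (for distinct unordered pairs). -/
def DistinctDists (X : Type*) [MetricSpace X] : Prop :=
  ∀ x y x' y' : X, x ≠ y → x' ≠ y' → dist x y = dist x' y' →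
    (x = x' ∧ y = y') ∨ (x = y' ∧ y = x')

/-- The nearest neighbor of `x` (meaningful when `|X| ≥ 2`). -/
noncomputable def nn (x : X) : X := ((nnList x).head?).getD x

section FunctionalGraph

variable {α : Type*} {f : α → α}

theorem SimpleGraph.exists_iterate_eq_of_reachable_fromRel {a b : α}
    (h : (SimpleGraph.fromRel fun x y => f x = y).Reachable a b) :
    ∃ m n, f^[m] a = f^[n] b := by
  rw [SimpleGraph.reachable_iff_reflTransGen] at h
  induction h with
  | refl => exact ⟨0, 0, rfl⟩
  | @tail u w _ huw ih =>
    obtain ⟨m, n, hmn⟩ := ih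
    rcases ((SimpleGraph.fromRel_adj _ _ _).mp huw).2 with rfl | rfl
    · cases n with
      | zero => exact ⟨m + 1, 0, by rw [Function.iterate_succ_apply', hmn]; rfl⟩
      | succ k => exact ⟨m, k, hmn⟩
    · exact ⟨m, n + 1, hmn⟩

theorem Function.iterate_eq_or_eq_apply_of_apply_apply {c : α} (hc : f (f c) = c) (n : ℕ) :
    f^[n] c = c ∨ f^[n] c = f c := by
  induction n with
  | zero => exact Or.inl rfl
  | succ n ih =>
    rw [Function.iterate_succ_apply']
    rcases ih with h | h <;> rw [h]
    exacts [Or.inr rfl, Or.inl hc]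

theorem SimpleGraph.eq_or_eq_apply_of_reachable_fromRel {a c : α} (ha : f (f a) = a)
    (hc : f (f c) = c) (h : (SimpleGraph.fromRel fun x y => f x = y).Reachable a c) :
    c = a ∨ c = f a := by
  obtain ⟨m, n, hmn⟩ := SimpleGraph.exists_iterate_eq_of_reachable_fromRel h
  rcases Function.iterate_eq_or_eq_apply_of_apply_apply ha m with hm | hm <;>
  rcases Function.iterate_eq_or_eq_apply_of_apply_apply hc n with hn | hn <;>
  rw [hm, hn] at hmn
  · exact Or.inl hmn.symm
  · exact Or.inr (by rw [← hc, ← hmn])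
  · exact Or.inr hmn.symm
  · exact Or.inl (by rw [← hc, ← hmn, ha])

end FunctionalGraph

section NearestNeighbor

theorem mem_nnCluster {k : ℕ} {x y : X} : y ∈ nnCluster k x ↔ (nnGraph k).Reachable x y := by
  simp [nnCluster]

theorem mem_nnList {x y : X} : y ∈ nnList x ↔ y ≠ x := by
  simp [nnList]

variable [Nontrivial X]

theorem nnList_eq_cons (x : X) : ∃ t, nnList x = nn x :: t := by
  cases h : nnList x with
  | nil =>
    obtain ⟨y, hy⟩ := exists_ne x
    simpa [h] using mem_nnList.mpr hy
  | cons y t => exact ⟨t, by simp [nn, h]⟩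

theorem nn_ne_self (x : X) : nn x ≠ x := by
  obtain ⟨t, h⟩ := nnList_eq_cons x
  exact mem_nnList.mp (h ▸ List.mem_cons_self)

theorem nnKey_nn_le {x y : X} (hy : y ≠ x) : nnKey x (nn x) ≤ nnKey x y := by
  obtain ⟨t, h⟩ := nnList_eq_cons x
  have hsorted : (nn x :: t).Pairwise fun y z => nnKey x y ≤ nnKey x z :=
    h ▸ pairwise_sort _ _
  have hmem : y ∈ nn x :: t := h ▸ mem_nnList.mpr hy
  rcases List.mem_cons.mp hmem with rfl | hmem
  · exact le_rfl
  · exact List.rel_of_pairwise_cons hsorted hmem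

theorem dist_nn_le {x y : X} (hy : y ≠ x) : dist x (nn x) ≤ dist x y :=
  Prod.Lex.monotone_fst _ _ (nnKey_nn_le hy)

theorem nbhd_one (x : X) : nbhd 1 x = {nn x} := by
  obtain ⟨t, h⟩ := nnList_eq_cons x
  simp [nbhd, h]

theorem nnGraph_one : nnGraph (X := X) 1 = SimpleGraph.fromRel fun x y => nn x = y := by
  ext x y
  simp only [nnGraph, nbhd_one, mem_singleton, SimpleGraph.fromRel_adj]
  grind

theorem nn_mem_nnCluster_one {x₀ x : X} (hx : x ∈ nnCluster 1 x₀) : nn x ∈ nnCluster 1 x₀ := by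
  have hadj : (nnGraph (X := X) 1).Adj x (nn x) := by
    rw [nnGraph_one, SimpleGraph.fromRel_adj]
    exact ⟨(nn_ne_self x).symm, Or.inl rfl⟩
  exact mem_nnCluster.mpr ((mem_nnCluster.mp hx).trans hadj.reachable)

theorem nn_nn_eq_self_of_dist_le (hd : DistinctDists X) {a : X}
    (h : dist a (nn a) ≤ dist (nn a) (nn (nn a))) : nn (nn a) = a := by
  have hle : dist (nn a) (nn (nn a)) ≤ dist a (nn a) :=
    (dist_nn_le (nn_ne_self a).symm).trans_eq (dist_comm _ _)
  rcases hd _ _ _ _ (nn_ne_self (nn a)).symm (nn_ne_self a).symm (hle.antisymm h) with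
    ⟨h', -⟩ | ⟨-, h'⟩
  · exact absurd h' (nn_ne_self a)
  · exact h'

theorem exists_lt_nn_nn_eq_self_mem_nnCluster_one (hd : DistinctDists X) (x₀ : X) :
    ∃ a ∈ nnCluster 1 x₀, a < nn a ∧ nn (nn a) = a := by
  have hx₀ : x₀ ∈ nnCluster 1 x₀ := mem_nnCluster.mpr .rfl
  obtain ⟨a, haC, hmin⟩ := exists_min_image (nnCluster 1 x₀) (fun z => dist z (nn z)) ⟨x₀, hx₀⟩
  have hmut := nn_nn_eq_self_of_dist_le hd (hmin _ (nn_mem_nnCluster_one haC))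
  rcases (nn_ne_self a).lt_or_gt with hlt | hlt
  · exact ⟨nn a, nn_mem_nnCluster_one haC, by rwa [hmut], by rw [hmut]⟩
  · exact ⟨a, haC, hlt, hmut⟩

end NearestNeighbor

/-- every component of the 1-NN graph contains exactly one pair
of mutual nearest neighbors. -/
theorem unique_mutual_pair_in_component (h2 : 2 ≤ Fintype.card X)
    (hd : DistinctDists X) :
    ∀ C ∈ maxClusters (X := X) 1,
      ∃! p : X × X, p.1 ∈ C ∧ p.2 ∈ C ∧ p.1 < p.2 ∧
        nn p.1 = p.2 ∧ nn p.2 = p.1 := by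
  have : Nontrivial X := Fintype.one_lt_card_iff_nontrivial.mp h2
  intro C hC
  obtain ⟨x₀, -, rfl⟩ := mem_image.mp hC
  obtain ⟨a, haC, hlt, hmut⟩ := exists_lt_nn_nn_eq_self_mem_nnCluster_one hd x₀
  refine ⟨(a, nn a), ⟨haC, nn_mem_nnCluster_one haC, hlt, rfl, hmut⟩, ?_⟩
  rintro ⟨c, d⟩ ⟨hcC : c ∈ _, -, hcd : c < d, rfl : nn c = d, hdc : nn (nn c) = c⟩
  have hreach : (SimpleGraph.fromRel fun x y => nn x = y).Reachable a c := by
    rw [← nnGraph_one]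
    exact (mem_nnCluster.mp haC).symm.trans (mem_nnCluster.mp hcC)
  rcases SimpleGraph.eq_or_eq_apply_of_reachable_fromRel hmut hdc hreach with rfl | rfl
  · rfl
  · rw [hmut] at hcd
    exact absurd hlt hcd.not_gt
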